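/- Let Σ = A₁ A₂ A₁ᴴ be an eigen-decomposition of a Hermitian matrix Σ ∈ ℂ^{n×n}, with A₁ unitary and A₂ diagonal with real diagonal entries d₁,…,dₙ. Fix κ ∈ ℝ with dᵢdⱼ + κ ≠ 0 for all i,j. Then the matrix equation Σ A Σᴴ + κ A = C has the unique solution A = A₁ A₃ A₁ᴴ, where A₃ is defined entrywise by (A₃)_{ij} = (A₁ᴴ C A₁)_{ij} / (dᵢ dⱼ + κ). -/

import Mathlib

/-!
Conjugation by the unitary `A₁` is a ⋆-algebra automorphism `φ` of the matrix algebra, and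
`Σ = φ D` with `D` the real, hence self-adjoint, diagonal matrix. Writing `A = φ B`, the equation
becomes `φ (D B D + κ B) = C`, i.e. `D B D + κ B = φ⁻¹ C`; entrywise this reads
`(dᵢ dⱼ + κ) B_ij = (φ⁻¹ C)_ij`, which determines `B` because `dᵢ dⱼ + κ ≠ 0`.
-/

open Matrix

theorem Matrix.diagonal_mul_mul_diagonal_add_smul_eq_iff {ι K : Type*} [Fintype ι]
    [DecidableEq ι] [Field K] {d : ι → K} {κ : K} (hκ : ∀ i j, d i * d j + κ ≠ 0)
    {B E : Matrix ι ι K} :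
    diagonal d * B * diagonal d + κ • B = E ↔ B = of fun i j => E i j / (d i * d j + κ) := by
  simp only [← Matrix.ext_iff, add_apply, mul_diagonal, diagonal_mul, smul_apply, smul_eq_mul,
    of_apply, eq_div_iff (hκ _ _)]
  refine forall₂_congr fun i j => ?_
  constructor <;> intro h <;> linear_combination h

theorem sylvester_like_unique_solution_general {n : ℕ}
    (Sig A₁ C : Matrix (Fin n) (Fin n) ℂ) (d : Fin n → ℝ) (κ : ℝ)
    (hSig : Sig = A₁ * Matrix.diagonal (fun i => (d i : ℂ)) * A₁ᴴ)
    (hU₁ : A₁ᴴ * A₁ = 1)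
    (hκ : ∀ i j, d i * d j + κ ≠ 0) :
    ∀ A : Matrix (Fin n) (Fin n) ℂ,
      Sig * A * Sigᴴ + (κ : ℂ) • A = C ↔
        A = A₁ * (Matrix.of fun i j => (A₁ᴴ * C * A₁) i j / ((d i * d j + κ : ℝ) : ℂ)) * A₁ᴴ := by
  intro A
  set D := Matrix.diagonal (fun i => (d i : ℂ))
  let φ := Unitary.conjStarAlgAut ℂ _ (⟨A₁, mem_unitaryGroup_iff'.mpr hU₁⟩ : unitary _)
  have hSigφ : Sig = φ D := hSig
  have hD : IsSelfAdjoint D := isHermitian_diagonal_iff.mpr fun i => Complex.conj_ofReal (d i)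
  have hSigH : Sigᴴ = Sig := hSigφ ▸ (hD.map φ).star_eq
  obtain ⟨B, rfl⟩ : ∃ B, φ B = A := ⟨φ.symm A, φ.apply_symm_apply A⟩
  have hκ' : ∀ i j, (d i : ℂ) * d j + κ ≠ 0 := fun i j => mod_cast hκ i j
  rw [hSigH, hSigφ, ← map_mul, ← map_mul, ← map_smul, ← map_add, ← φ.eq_symm_apply,
    diagonal_mul_mul_diagonal_add_smul_eq_iff hκ']
  push_cast
  exact φ.injective.eq_iff.symm

theorem sylvester_like_unique_solution {n : ℕ}
    (Sig A₁ C : Matrix (Fin n) (Fin n) ℂ) (d : Fin n → ℝ) (κ : ℝ)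
    (hSig : Sig = A₁ * Matrix.diagonal (fun i => (d i : ℂ)) * A₁ᴴ)
    (hU₁ : A₁ᴴ * A₁ = 1) (hU₂ : A₁ * A₁ᴴ = 1)
    (hκ : ∀ i j, d i * d j + κ ≠ 0) :
    ∀ A : Matrix (Fin n) (Fin n) ℂ,
      Sig * A * Sigᴴ + (κ : ℂ) • A = C ↔
        A = A₁ * (Matrix.of fun i j => (A₁ᴴ * C * A₁) i j / ((d i * d j + κ : ℝ) : ℂ)) * A₁ᴴ :=
  sylvester_like_unique_solution_general Sig A₁ C d κ hSig hU₁ hκ
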